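/- If X ∈ O_n^T satisfies Tr_i X = 0 for some i ∈ [n] (in particular if n = 1), then ‖X‖_{W1} = (1/2)‖X‖₁. Consequently, for any quantum states ρ, σ ∈ S_n with Tr_i ρ = Tr_i σ for some i ∈ [n], one has ‖ρ − σ‖_{W1} = (1/2)‖ρ − σ‖₁. -/

import Mathlib

open scoped BigOperators
open scoped Classical
open scoped ComplexOrder

noncomputable section

namespace QW1

/-- Configurations of `n` qudits of local dimension `d`:
the index set of the canonical basis of `(ℂ^d)^{⊗ n}`. -/
abbrev Cfg (d n : ℕ) : Type := Fin n → Fin d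

/-- Linear operators on the Hilbert space of `n` qudits, represented as matrices
in the canonical basis. -/
abbrev Mat (d n : ℕ) : Type := Matrix (Cfg d n) (Cfg d n) ℂ

/-- The trace norm `‖A‖₁ = Tr √(Aᴴ A)`. -/
noncomputable def traceNorm {ι : Type} [Fintype ι] [DecidableEq ι] (A : Matrix ι ι ℂ) : ℝ :=
  ((((Matrix.posSemidef_conjTranspose_mul_self A).1.eigenvectorUnitary : Matrix ι ι ℂ) *
      Matrix.diagonal (((↑) : ℝ → ℂ) ∘ Real.sqrt ∘ (Matrix.posSemidef_conjTranspose_mul_self A).1.eigenvalues) *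
      (star ((Matrix.posSemidef_conjTranspose_mul_self A).1.eigenvectorUnitary : Matrix ι ι ℂ))).trace).re

/-- The operator norm `‖A‖_∞`. -/
noncomputable def opNorm {ι : Type} [Fintype ι] [DecidableEq ι] (A : Matrix ι ι ℂ) : ℝ :=
  ‖Matrix.toEuclideanCLM (𝕜 := ℂ) A‖

/-- Quantum states: positive semidefinite operators with unit trace. -/
def IsState {ι : Type} [Fintype ι] (ρ : Matrix ι ι ℂ) : Prop :=
  ρ.PosSemidef ∧ ρ.trace = 1

/-- Insert the value `s` at position `i` into a configuration `a` of the remaining qudits. -/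
def ins {d n : ℕ} (i : Fin n) (a : {j : Fin n // j ≠ i} → Fin d) (s : Fin d) : Cfg d n :=
  fun j => if h : j = i then s else a ⟨j, h⟩

/-- The partial trace over the `i`-th qudit. -/
noncomputable def ptrace {d n : ℕ} (i : Fin n) (X : Mat d n) :
    Matrix ({j : Fin n // j ≠ i} → Fin d) ({j : Fin n // j ≠ i} → Fin d) ℂ :=
  fun a b => ∑ s : Fin d, X (ins i a s) (ins i b s)

/-- The marginal of `ρ` on the `i`-th qudit (partial trace over all the other qudits). -/
noncomputable def marginal {d n : ℕ} (i : Fin n) (ρ : Mat d n) :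
    Matrix (Fin d) (Fin d) ℂ :=
  fun s t => ∑ a : ({j : Fin n // j ≠ i} → Fin d), ρ (ins i a s) (ins i a t)

/-- Combine a configuration `s` of the qudits in `I` with a configuration `a` of the rest. -/
def insSet {d n : ℕ} (I : Finset (Fin n)) (a : {j : Fin n // j ∉ I} → Fin d)
    (s : {j : Fin n // j ∈ I} → Fin d) : Cfg d n :=
  fun j => if h : j ∈ I then s ⟨j, h⟩ else a ⟨j, h⟩

/-- The partial trace over the qudits in `I`. -/
noncomputable def ptraceSet {d n : ℕ} (I : Finset (Fin n)) (X : Mat d n) :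
    Matrix ({j : Fin n // j ∉ I} → Fin d) ({j : Fin n // j ∉ I} → Fin d) ℂ :=
  fun a b => ∑ s : ({j : Fin n // j ∈ I} → Fin d), X (insSet I a s) (insSet I b s)

/-- The set of values `(1/2) ∑ i ‖X⁽ⁱ⁾‖₁` over all decompositions `X = ∑ i X⁽ⁱ⁾` with
`X⁽ⁱ⁾` self-adjoint and `Tr_i X⁽ⁱ⁾ = 0`. -/
def W1Set {d n : ℕ} (X : Mat d n) : Set ℝ :=
  { r | ∃ Y : Fin n → Mat d n, (∀ i, (Y i).IsHermitian) ∧ (∀ i, ptrace i (Y i) = 0) ∧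
      X = ∑ i, Y i ∧ r = (1 / 2) * ∑ i, traceNorm (Y i) }

/-- The quantum `W₁` norm. -/
noncomputable def W1 {d n : ℕ} (X : Mat d n) : ℝ := sInf (W1Set X)

/-- The quantum Lipschitz constant: the dual norm of the quantum `W₁` norm. -/
noncomputable def lipschitz {d n : ℕ} (H : Mat d n) : ℝ :=
  sSup { r | ∃ X : Mat d n, X.IsHermitian ∧ X.trace = 0 ∧ W1 X ≤ 1 ∧
    r = ((H * X).trace).re }

/-- Extension `Φ ⊗ id_R` of a map on matrices. -/
def extendMap {A B R : Type} [Fintype A] [Fintype B] [Fintype R]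
    (Φ : Matrix A A ℂ → Matrix B B ℂ) (M : Matrix (A × R) (A × R) ℂ) :
    Matrix (B × R) (B × R) ℂ :=
  fun p q => Φ (fun a a' => M (a, p.2) (a', q.2)) p.1 q.1

/-- Quantum channels: completely positive trace-preserving linear maps. -/
def IsCPTP {A B : Type} [Fintype A] [Fintype B]
    (Φ : Matrix A A ℂ →ₗ[ℂ] Matrix B B ℂ) : Prop :=
  (∀ (k : ℕ) (M : Matrix (A × Fin k) (A × Fin k) ℂ), M.PosSemidef →
    (extendMap (fun N => Φ N) M).PosSemidef) ∧
  ∀ M, (Φ M).trace = M.trace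

/-- Action `φ_i ⊗ id` of a single-qudit map `φ` on the `i`-th qudit of `n` qudits. -/
def applyAt {d n : ℕ} (i : Fin n) (φ : Matrix (Fin d) (Fin d) ℂ → Matrix (Fin d) (Fin d) ℂ)
    (X : Mat d n) : Mat d n :=
  fun a b => φ (fun s t => X (Function.update a i s) (Function.update b i t)) (a i) (b i)

/-- Action `φ_I ⊗ id` of a map `φ` on the qudits in `I`. -/
def applyOn {d n : ℕ} (I : Finset (Fin n))
    (φ : Matrix ({j : Fin n // j ∈ I} → Fin d) ({j : Fin n // j ∈ I} → Fin d) ℂ →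
         Matrix ({j : Fin n // j ∈ I} → Fin d) ({j : Fin n // j ∈ I} → Fin d) ℂ)
    (X : Mat d n) : Mat d n :=
  fun a b =>
    φ (fun s t => X (insSet I (fun j => a j) s) (insSet I (fun j => b j) t))
      (fun j => a j) (fun j => b j)

/-- The operator obtained from `X` by permuting the tensor factors according to `π`. -/
def permuteMat {d n : ℕ} (π : Equiv.Perm (Fin n)) (X : Mat d n) : Mat d n :=
  fun a b => X (a ∘ π) (b ∘ π)

/-- Tensor product of an operator on the first `m` qudits with one on the last `n` qudits. -/
def tensorMN {d m n : ℕ} (A : Mat d m) (B : Mat d n) : Mat d (m + n) :=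
  fun a b =>
    A (fun i => a (Fin.castAdd n i)) (fun i => b (Fin.castAdd n i)) *
    B (fun j => a (Fin.natAdd m j)) (fun j => b (Fin.natAdd m j))

/-- Partial trace of an operator on `m + n` qudits over the last `n` qudits. -/
noncomputable def ptraceLast {d m n : ℕ} (X : Mat d (m + n)) : Mat d m :=
  fun a b => ∑ k : Cfg d n, X (Fin.append a k) (Fin.append b k)

/-- Partial trace of an operator on `m + n` qudits over the first `m` qudits. -/
noncomputable def ptraceFirst {d m n : ℕ} (X : Mat d (m + n)) : Mat d n :=
  fun a b => ∑ k : Cfg d m, X (Fin.append k a) (Fin.append k b)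

/-- `n`-fold tensor product `σ₁ ⊗ ⋯ ⊗ σₙ` of single-qudit operators. -/
def tensorAll {d n : ℕ} (σs : Fin n → Matrix (Fin d) (Fin d) ℂ) : Mat d n :=
  fun a b => ∏ i, σs i (a i) (b i)

/-- `I_d^{(i)} ⊗ K`: the identity on the `i`-th qudit tensored with an operator `K`
on the remaining qudits. -/
def idTensorAt {d n : ℕ} (i : Fin n)
    (K : Matrix ({j : Fin n // j ≠ i} → Fin d) ({j : Fin n // j ≠ i} → Fin d) ℂ) :
    Mat d n :=
  fun a b => if a i = b i then K (fun j => a j) (fun j => b j) else 0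

/-- `K ⊗ identity`: an operator acting only on the qudits in `I`. -/
def embedOn {d n : ℕ} (I : Finset (Fin n))
    (K : Matrix ({j : Fin n // j ∈ I} → Fin d) ({j : Fin n // j ∈ I} → Fin d) ℂ) :
    Mat d n :=
  fun a b => if (∀ j, j ∉ I → a j = b j) then K (fun j => a j) (fun j => b j) else 0

/-- The `n`-th tensor power `φ^{⊗n}` of a single-qudit linear map `φ`. -/
noncomputable def tensorPowMap {d n : ℕ}
    (φ : Matrix (Fin d) (Fin d) ℂ → Matrix (Fin d) (Fin d) ℂ) (X : Mat d n) : Mat d n :=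
  fun a b => ∑ s : Cfg d n, ∑ t : Cfg d n,
    X s t * ∏ j, φ (Matrix.single (s j) (t j) 1) (a j) (b j)

/-- The `1 → 1` norm of a map on single-qudit operators. -/
noncomputable def norm1to1 {d : ℕ}
    (F : Matrix (Fin d) (Fin d) ℂ → Matrix (Fin d) (Fin d) ℂ) : ℝ :=
  sSup { r | ∃ ρ : Matrix (Fin d) (Fin d) ℂ, IsState ρ ∧ r = traceNorm (F ρ) }

/-- The diamond norm of a map on single-qudit operators. -/
noncomputable def diamondNorm {d : ℕ}
    (F : Matrix (Fin d) (Fin d) ℂ → Matrix (Fin d) (Fin d) ℂ) : ℝ :=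
  sSup { r | ∃ ρ : Matrix (Fin d × Fin d) (Fin d × Fin d) ℂ, IsState ρ ∧
    r = traceNorm (extendMap F ρ) }

/-- The contraction coefficient (`W₁ → W₁` norm) of a map on `n`-qudit operators. -/
noncomputable def W1toW1 {d n : ℕ} (Φ : Mat d n → Mat d n) : ℝ :=
  sSup { r | ∃ X : Mat d n, X.IsHermitian ∧ X.trace = 0 ∧ W1 X ≤ 1 ∧ r = W1 (Φ X) }

/-- The von Neumann entropy `S(ρ) = -Tr[ρ ln ρ]` (natural logarithm). -/
noncomputable def vnEntropy {ι : Type} [Fintype ι] [DecidableEq ι] (ρ : Matrix ι ι ℂ) : ℝ :=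
  if h : ρ.IsHermitian then -∑ i, h.eigenvalues i * Real.log (h.eigenvalues i) else 0

/-- The logarithm of a self-adjoint matrix, via the spectral decomposition. -/
noncomputable def matLog {ι : Type} [Fintype ι] [DecidableEq ι] (ρ : Matrix ι ι ℂ) :
    Matrix ι ι ℂ :=
  if h : ρ.IsHermitian then
    (h.eigenvectorUnitary : Matrix ι ι ℂ) *
      Matrix.diagonal (fun i => (Real.log (h.eigenvalues i) : ℂ)) *
      (star (h.eigenvectorUnitary : Matrix ι ι ℂ))
  else 0

/-- The quantum relative entropy `S(ρ‖σ) = Tr[ρ (ln ρ - ln σ)]`. -/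
noncomputable def relEntropy {ι : Type} [Fintype ι] [DecidableEq ι]
    (ρ σ : Matrix ι ι ℂ) : ℝ :=
  ((ρ * (matLog ρ - matLog σ)).trace).re

/-- The Hamming distance between two configurations. -/
def hamming {d n : ℕ} (x y : Cfg d n) : ℕ :=
  (Finset.univ.filter (fun i => x i ≠ y i)).card

/-- Probability distributions on a finite set. -/
def IsProb {α : Type} [Fintype α] (p : α → ℝ) : Prop :=
  (∀ x, 0 ≤ p x) ∧ ∑ x, p x = 1

/-- Couplings of two probability distributions. -/
def IsCoupling {α : Type} [Fintype α] (π : α × α → ℝ) (p q : α → ℝ) : Prop :=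
  IsProb π ∧ (∀ x, ∑ y, π (x, y) = p x) ∧ (∀ y, ∑ x, π (x, y) = q y)

/-- The classical Wasserstein distance of order 1 with respect to the Hamming distance. -/
noncomputable def classicalW1 {d n : ℕ} (p q : Cfg d n → ℝ) : ℝ :=
  sInf { c | ∃ π : Cfg d n × Cfg d n → ℝ, IsCoupling π p q ∧
    c = ∑ x : Cfg d n, ∑ y : Cfg d n, (hamming x y : ℝ) * π (x, y) }

/-- The Lipschitz constant of a function on `[d]^n` with respect to the Hamming distance. -/
noncomputable def classicalLip {d n : ℕ} (f : Cfg d n → ℝ) : ℝ :=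
  sSup { r | ∃ x y : Cfg d n, x ≠ y ∧ r = |f x - f y| / (hamming x y : ℝ) }


/-!
The decomposition putting all of `X` on a qudit `i` with `Tr_i X = 0` gives `W₁(X) ≤ ‖X‖₁ / 2`.
The reverse bound is the triangle inequality `‖∑ Yᵢ‖₁ ≤ ∑ ‖Yᵢ‖₁` for self-adjoint `Yᵢ`, proved by
pinching: for self-adjoint `A`, `‖A‖₁ = ∑ |λₖ(A)|`, and in any orthonormal basis `(uⱼ)` the
diagonal of `A` satisfies `∑ⱼ |⟨uⱼ, A uⱼ⟩| ≤ ∑ₖ |λₖ(A)|`. Taking `(uⱼ)` an eigenbasis of `∑ Yᵢ`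
gives `‖∑ Yᵢ‖₁ = ∑ⱼ |∑ᵢ ⟨uⱼ, Yᵢ uⱼ⟩| ≤ ∑ᵢ ‖Yᵢ‖₁`.
-/

section TraceNorm

open Matrix Unitary

variable {ι : Type} [Fintype ι] [DecidableEq ι]

lemma traceNorm_eq_re_trace_cfc_sqrt (A : Matrix ι ι ℂ) :
    traceNorm A = (cfc Real.sqrt (Aᴴ * A)).trace.re := by
  rw [(posSemidef_conjTranspose_mul_self A).isHermitian.cfc_eq, IsHermitian.cfc,
    conjStarAlgAut_apply]
  rfl

lemma traceNorm_zero : traceNorm (0 : Matrix ι ι ℂ) = 0 := by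
  simp [traceNorm_eq_re_trace_cfc_sqrt]

lemma _root_.Matrix.IsHermitian.trace_cfc {𝕜 : Type*} [RCLike 𝕜] {A : Matrix ι ι 𝕜}
    (hA : A.IsHermitian) (f : ℝ → ℝ) : (cfc f A).trace = ∑ i, (f (hA.eigenvalues i) : 𝕜) := by
  rw [hA.cfc_eq, IsHermitian.cfc, conjStarAlgAut_apply, trace_mul_cycle, coe_star_mul_self,
    one_mul, trace_diagonal]
  rfl

lemma _root_.Matrix.IsHermitian.traceNorm_eq_sum_abs_eigenvalues {A : Matrix ι ι ℂ}
    (hA : A.IsHermitian) : traceNorm A = ∑ i, |hA.eigenvalues i| := by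
  have hsq : cfc (fun x : ℝ => Real.sqrt (x ^ 2)) A = cfc Real.sqrt (Aᴴ * A) := by
    rw [cfc_comp_pow Real.sqrt 2 A, hA.eq, sq]
  rw [traceNorm_eq_re_trace_cfc_sqrt, ← hsq, hA.trace_cfc, Complex.re_sum]
  simp [Real.sqrt_sq_eq_abs]

lemma mul_diagonal_mul_star_apply_self (W : Matrix ι ι ℂ) (c : ι → ℂ) (j : ι) :
    (W * diagonal c * star W) j j = ∑ k, c k * (Complex.normSq (W j k) : ℂ) := by
  rw [mul_apply]
  refine Finset.sum_congr rfl fun k _ => ?_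
  rw [mul_diagonal, star_apply, RCLike.star_def, mul_right_comm, Complex.mul_conj, mul_comm]

lemma sum_normSq_apply_eq_one (W : unitaryGroup ι ℂ) (k : ι) :
    ∑ j, Complex.normSq ((W : Matrix ι ι ℂ) j k) = 1 := by
  have h := congrFun (congrFun (coe_star_mul_self W) k) k
  simp only [mul_apply, star_apply, RCLike.star_def, one_apply_eq, mul_comm (starRingEnd ℂ _),
    Complex.mul_conj] at h
  exact_mod_cast h

lemma _root_.Matrix.IsHermitian.sum_norm_diag_unitary_conj_le {A : Matrix ι ι ℂ}
    (hA : A.IsHermitian) (U : unitaryGroup ι ℂ) :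
    ∑ j, ‖(star (U : Matrix ι ι ℂ) * A * U) j j‖ ≤ ∑ k, |hA.eigenvalues k| := by
  set W : unitaryGroup ι ℂ := star U * hA.eigenvectorUnitary
  have hconj : star (U : Matrix ι ι ℂ) * A * U =
      W * diagonal (fun k => (hA.eigenvalues k : ℂ)) * star (W : Matrix ι ι ℂ) := by
    conv_lhs => rw [hA.spectral_theorem, conjStarAlgAut_apply]
    simp only [W, Submonoid.coe_mul, Unitary.coe_star, star_mul, star_star, mul_assoc]
    rfl
  calc ∑ j, ‖(star (U : Matrix ι ι ℂ) * A * U) j j‖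
      ≤ ∑ j, ∑ k, |hA.eigenvalues k| * Complex.normSq ((W : Matrix ι ι ℂ) j k) := by
        refine Finset.sum_le_sum fun j _ => ?_
        rw [hconj, mul_diagonal_mul_star_apply_self]
        refine (norm_sum_le _ _).trans_eq (Finset.sum_congr rfl fun k _ => ?_)
        rw [norm_mul, Complex.norm_real, Complex.norm_real, Real.norm_eq_abs,
          Real.norm_of_nonneg (Complex.normSq_nonneg _)]
    _ = ∑ k, |hA.eigenvalues k| := by
        rw [Finset.sum_comm]
        simp only [← Finset.mul_sum, sum_normSq_apply_eq_one, mul_one]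

lemma _root_.Matrix.IsHermitian.star_eigenvectorUnitary_mul_mul_apply_self {A : Matrix ι ι ℂ}
    (hA : A.IsHermitian) (j : ι) :
    (star (hA.eigenvectorUnitary : Matrix ι ι ℂ) * A * hA.eigenvectorUnitary) j j =
      hA.eigenvalues j := by
  have h := hA.conjStarAlgAut_star_eigenvectorUnitary
  rw [conjStarAlgAut_apply, Unitary.coe_star, star_star] at h
  rw [h, diagonal_apply_eq]
  rfl

lemma traceNorm_sum_le_of_isHermitian {κ : Type*} (s : Finset κ) (Y : κ → Matrix ι ι ℂ)
    (hY : ∀ i ∈ s, (Y i).IsHermitian) :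
    traceNorm (∑ i ∈ s, Y i) ≤ ∑ i ∈ s, traceNorm (Y i) := by
  have hX : (∑ i ∈ s, Y i).IsHermitian := isSelfAdjoint_sum s hY
  set U := hX.eigenvectorUnitary
  calc traceNorm (∑ i ∈ s, Y i)
      = ∑ j, ‖∑ i ∈ s, (star (U : Matrix ι ι ℂ) * Y i * U) j j‖ := by
        rw [hX.traceNorm_eq_sum_abs_eigenvalues]
        refine Finset.sum_congr rfl fun j _ => ?_
        rw [← Matrix.sum_apply, ← Finset.sum_mul, ← Finset.mul_sum,
          hX.star_eigenvectorUnitary_mul_mul_apply_self, Complex.norm_real, Real.norm_eq_abs]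
    _ ≤ ∑ i ∈ s, ∑ j, ‖(star (U : Matrix ι ι ℂ) * Y i * U) j j‖ := by
        rw [Finset.sum_comm]
        exact Finset.sum_le_sum fun j _ => norm_sum_le _ _
    _ ≤ ∑ i ∈ s, traceNorm (Y i) := Finset.sum_le_sum fun i hi => by
        rw [(hY i hi).traceNorm_eq_sum_abs_eigenvalues]
        exact (hY i hi).sum_norm_diag_unitary_conj_le U

end TraceNorm

section W1

variable {d n : ℕ}

lemma ptrace_sub (i : Fin n) (X Y : Mat d n) :
    ptrace i (X - Y) = ptrace i X - ptrace i Y := by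
  ext a b
  simp only [ptrace, Matrix.sub_apply, Finset.sum_sub_distrib]

lemma half_traceNorm_le_of_mem_W1Set {X : Mat d n} {r : ℝ} (hr : r ∈ W1Set X) :
    (1 / 2) * traceNorm X ≤ r := by
  obtain ⟨Y, hY, -, rfl, rfl⟩ := hr
  gcongr
  exact traceNorm_sum_le_of_isHermitian _ Y fun i _ => hY i

lemma half_traceNorm_mem_W1Set {X : Mat d n} (hX : X.IsHermitian) {i : Fin n}
    (hi : ptrace i X = 0) : (1 / 2) * traceNorm X ∈ W1Set X := by
  refine ⟨Pi.single i X, fun j => ?_, fun j => ?_, by simp, ?_⟩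
  · rcases eq_or_ne j i with rfl | h
    · simpa using hX
    · simp [h]
  · rcases eq_or_ne j i with rfl | h
    · simpa using hi
    · ext a b
      simp [h, ptrace]
  · rw [Fintype.sum_eq_single i fun j hj => by simp [hj, traceNorm_zero], Pi.single_eq_same]

theorem W1_eq_half_traceNorm_of_ptrace_eq_zero {X : Mat d n} (hX : X.IsHermitian) {i : Fin n}
    (hi : ptrace i X = 0) : W1 X = (1 / 2) * traceNorm X :=
  IsLeast.csInf_eq ⟨half_traceNorm_mem_W1Set hX hi, fun _ => half_traceNorm_le_of_mem_W1Set⟩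

end W1

theorem stmt8_general {d n : ℕ} :
    (∀ X : Mat d n, X.IsHermitian → X.trace = 0 → (∃ i, ptrace i X = 0) →
      W1 X = (1 / 2) * traceNorm X) ∧
    ∀ ρ σ : Mat d n, IsState ρ → IsState σ → (∃ i, ptrace i ρ = ptrace i σ) →
      W1 (ρ - σ) = (1 / 2) * traceNorm (ρ - σ) := by
  refine ⟨fun X hX _ ⟨i, hi⟩ => W1_eq_half_traceNorm_of_ptrace_eq_zero hX hi,
    fun ρ σ hρ hσ ⟨i, hi⟩ => W1_eq_half_traceNorm_of_ptrace_eq_zero (i := i) ?_ ?_⟩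
  · exact hρ.1.isHermitian.sub hσ.1.isHermitian
  · rw [ptrace_sub, hi, sub_self]

theorem stmt8 {d n : ℕ} (hd : 2 ≤ d) (hn : 1 ≤ n) :
    (∀ X : Mat d n, X.IsHermitian → X.trace = 0 → (∃ i, ptrace i X = 0) →
      W1 X = (1 / 2) * traceNorm X) ∧
    ∀ ρ σ : Mat d n, IsState ρ → IsState σ → (∃ i, ptrace i ρ = ptrace i σ) →
      W1 (ρ - σ) = (1 / 2) * traceNorm (ρ - σ) :=
  stmt8_general

end QW1
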